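/- Let E be a directed graph and e ∈ E⁰ a vertex. If C₁ᵉ \ {e} contains exactly one element, then the inverse subsemigroup ⟨Cᵉ⟩ of G(E) generated by all cycles based at e is isomorphic to the bicyclic monoid. -/

import Mathlib

/-- A directed graph: vertices, edges, source and range maps. -/
structure DGraph where
  V : Type
  E : Type
  s : E → V
  r : E → V

namespace DGraph

variable {Q : DGraph}

/-- `pOk Q a l` : the list of edges `l` forms a valid path starting at vertex `a`. -/
def pOk (Q : DGraph) : Q.V → List Q.E → Prop
  | _, [] => True
  | a, e :: l => Q.s e = a ∧ pOk Q (Q.r e) l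

/-- The end vertex of an edge-list starting at `a`. -/
def pRng (Q : DGraph) (a : Q.V) (l : List Q.E) : Q.V :=
  l.foldl (fun _ e => Q.r e) a

theorem pRng_append (a : Q.V) (l₁ l₂ : List Q.E) :
    pRng Q a (l₁ ++ l₂) = pRng Q (pRng Q a l₁) l₂ :=
  List.foldl_append

theorem pOk_append {a : Q.V} {l₁ l₂ : List Q.E} (h₁ : pOk Q a l₁)
    (h₂ : pOk Q (pRng Q a l₁) l₂) : pOk Q a (l₁ ++ l₂) := by
  induction l₁ generalizing a with
  | nil => simpa [pRng] using h₂
  | cons e l ih =>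
      obtain ⟨he, hl⟩ := h₁
      exact ⟨he, ih hl h₂⟩

theorem pOk_drop {a : Q.V} {l₁ l₂ : List Q.E} (h : pOk Q a (l₁ ++ l₂)) :
    pOk Q (pRng Q a l₁) l₂ := by
  induction l₁ generalizing a with
  | nil => simpa [pRng] using h
  | cons e l ih => exact ih h.2

/-- A (finite, directed) path in the graph `Q`: a start vertex together with a
compatible list of edges.  Paths of length `0` are vertices. -/
structure GPath (Q : DGraph) where
  start : Q.V
  edges : List Q.E
  ok : pOk Q start edges

/-- The source `s(p)` of a path. -/
def GPath.src (p : GPath Q) : Q.V := p.start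

/-- The range `r(p)` of a path. -/
def GPath.rng (p : GPath Q) : Q.V := pRng Q p.start p.edges

/-- The length `|p|` of a path. -/
def GPath.length (p : GPath Q) : ℕ := p.edges.length

/-- The trivial (length zero) path at a vertex `a`. -/
def GPath.triv (Q : DGraph) (a : Q.V) : GPath Q := ⟨a, [], trivial⟩

/-- Concatenation of composable paths. -/
def GPath.comp (p q : GPath Q) (h : p.rng = q.start) : GPath Q :=
  ⟨p.start, p.edges ++ q.edges, pOk_append p.ok (by
    have hq := q.ok
    rw [← h] at hq
    exact hq)⟩

theorem GPath.comp_rng (p q : GPath Q) (h : p.rng = q.start) :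
    (p.comp q h).rng = q.rng := by
  show pRng Q p.start (p.edges ++ q.edges) = q.rng
  rw [pRng_append, show pRng Q p.start p.edges = q.start from h]
  rfl

theorem exists_sub {p q : GPath Q} (h1 : q.start = p.start)
    (h2 : p.edges <+: q.edges) :
    ∃ w : GPath Q, w.start = p.rng ∧ w.rng = q.rng ∧ p.edges ++ w.edges = q.edges := by
  obtain ⟨t, ht⟩ := h2
  have hok : pOk Q p.start (p.edges ++ t) := by rw [ht, ← h1]; exact q.ok
  refine ⟨⟨p.rng, t, pOk_drop hok⟩, rfl, ?_, ht⟩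
  show pRng Q (pRng Q p.start p.edges) t = pRng Q q.start q.edges
  rw [← pRng_append, ht, ← h1]

/-- If the path `q` decomposes as `p·w`, this is the path `w`. -/
noncomputable def subPath (p q : GPath Q) (h1 : q.start = p.start)
    (h2 : p.edges <+: q.edges) : GPath Q :=
  (exists_sub h1 h2).choose

theorem subPath_spec (p q : GPath Q) (h1 : q.start = p.start)
    (h2 : p.edges <+: q.edges) :
    (subPath p q h1 h2).start = p.rng ∧ (subPath p q h1 h2).rng = q.rng ∧
      p.edges ++ (subPath p q h1 h2).edges = q.edges :=
  (exists_sub h1 h2).choose_spec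

/-- The graph inverse semigroup `G(E)` over the graph `Q`: the element `0`
together with the elements `u v⁻¹` where `u, v` are paths with `r(u) = r(v)`. -/
inductive GIS (Q : DGraph) : Type
  | zero : GIS Q
  | elm (u v : GPath Q) (h : u.rng = v.rng) : GIS Q

instance : Zero (GIS Q) := ⟨GIS.zero⟩

-- Multiplication in the graph inverse semigroup:
-- `u₁v₁⁻¹ · u₂v₂⁻¹ = u₁wv₂⁻¹` if `u₂ = v₁w`, `u₁(v₂w)⁻¹` if `v₁ = u₂w`, `0` otherwise.
open Classical in
noncomputable def GIS.mul : GIS Q → GIS Q → GIS Q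
  | .zero, _ => .zero
  | _, .zero => .zero
  | .elm u₁ v₁ h₁, .elm u₂ v₂ h₂ =>
    if hA : u₂.start = v₁.start ∧ v₁.edges <+: u₂.edges then
      GIS.elm (u₁.comp (subPath v₁ u₂ hA.1 hA.2)
          (by rw [(subPath_spec v₁ u₂ hA.1 hA.2).1, h₁]))
        v₂
        (by rw [GPath.comp_rng, (subPath_spec v₁ u₂ hA.1 hA.2).2.1, h₂])
    else if hB : v₁.start = u₂.start ∧ u₂.edges <+: v₁.edges then
      GIS.elm u₁
        (v₂.comp (subPath u₂ v₁ hB.1 hB.2)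
          (by rw [(subPath_spec u₂ v₁ hB.1 hB.2).1, h₂]))
        (by rw [GPath.comp_rng, (subPath_spec u₂ v₁ hB.1 hB.2).2.1, h₁])
    else .zero

noncomputable instance : Mul (GIS Q) := ⟨GIS.mul⟩

/-- The inversion map of the graph inverse semigroup: `(uv⁻¹)⁻¹ = vu⁻¹`, `0⁻¹ = 0`. -/
def GIS.inv : GIS Q → GIS Q
  | .zero => .zero
  | .elm u v h => .elm v u h.symm

/-- The canonical identification of a path `u` with the element `u · r(u)⁻¹` of `G(E)`. -/
def toGIS (p : GPath Q) : GIS Q := GIS.elm p (GPath.triv Q p.rng) rfl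

end DGraph


namespace DGraph
variable {Q : DGraph}
/-- The inverse subsemigroup of `G(E)` generated by a subset `S`. -/
inductive genInv (S : Set (GIS Q)) : GIS Q → Prop
  | base {x : GIS Q} : x ∈ S → genInv S x
  | mul {x y : GIS Q} : genInv S x → genInv S y → genInv S (x * y)
  | inv {x : GIS Q} : genInv S x → genInv S (GIS.inv x)

/-- `Cᵉ`: the set of cycles based at `e` (including the trivial path `e`). -/
def Cyc (Q : DGraph) (e : Q.V) : Set (GPath Q) := {u | u.start = e ∧ u.rng = e}

/-- `C₁ᵉ`: cycles based at `e` whose non-trivial proper prefixes do not end at `e`. -/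
def Cyc1 (Q : DGraph) (e : Q.V) : Set (GPath Q) :=
  {u | u ∈ Cyc Q e ∧ ∀ v : GPath Q, v.start = u.start → v.edges <+: u.edges →
      v.edges ≠ [] → v.edges ≠ u.edges → v.rng ≠ e}
end DGraph


namespace DGraph
noncomputable instance {Q : DGraph} (S : Set (GIS Q)) :
    Mul {x : GIS Q // genInv S x} :=
  ⟨fun a b => ⟨a.1 * b.1, genInv.mul a.2 b.2⟩⟩
end DGraph


/-- The bicyclic monoid `⟨p, q | pq = 1⟩`, realized on `ℕ × ℕ` via `(m, n) ↦ qᵐpⁿ`. -/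
def Bic : Type := ℕ × ℕ

instance : Mul Bic :=
  ⟨fun a b => (a.1 + b.1 - min a.2 b.1, a.2 + b.2 - min a.2 b.1)⟩

open DGraph

/-!
Let `u` be the unique non-trivial element of `C₁ᵉ`. Cutting a cycle at `e` at its first return
to `e` splits off an element of `C₁ᵉ \ {e}`, i.e. a copy of `u`, so every cycle at `e` is a power
`uⁿ`. Hence `⟨Cᵉ⟩` consists of the elements `uᵐ (uⁿ)⁻¹`, these are pairwise distinct, and they
multiply by the rule `(m, n) (k, l) = (m + k - min n k, n + l - min n k)` of the bicyclic monoid.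
-/

namespace DGraph

variable {Q : DGraph} {e : Q.V} {u : GPath Q}

theorem GPath.ext {p q : GPath Q} (h₁ : p.start = q.start) (h₂ : p.edges = q.edges) :
    p = q := by
  cases p; cases q; cases h₁; cases h₂; rfl

theorem GIS.elm_congr {a b a' b' : GPath Q} {h : a.rng = b.rng} {h' : a'.rng = b'.rng}
    (ha : a = a') (hb : b = b') : GIS.elm a b h = GIS.elm a' b' h' := by
  subst ha hb; rfl

theorem pOk_of_append {a : Q.V} {l₁ l₂ : List Q.E} (h : pOk Q a (l₁ ++ l₂)) : pOk Q a l₁ := by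
  induction l₁ generalizing a with
  | nil => trivial
  | cons f l ih => exact ⟨h.1, ih h.2⟩

theorem pOk_of_mem_Cyc (hu : u ∈ Cyc Q e) : pOk Q e u.edges :=
  hu.1 ▸ u.ok

theorem pRng_of_mem_Cyc (hu : u ∈ Cyc Q e) : pRng Q e u.edges = e :=
  hu.1 ▸ hu.2

theorem mem_Cyc1_of_forall_take {p : GPath Q} (hp : p ∈ Cyc Q e)
    (hmin : ∀ j, 0 < j → j < p.edges.length → pRng Q e (p.edges.take j) ≠ e) :
    p ∈ Cyc1 Q e := by
  refine ⟨hp, fun v hvs hvp hvne hvp' => ?_⟩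
  have hv : v.edges = p.edges.take v.edges.length := List.prefix_iff_eq_take.mp hvp
  have hlt : v.edges.length < p.edges.length :=
    hvp.length_le.lt_of_ne fun h => hvp' (by rw [hv, h, List.take_length])
  have hrng : v.rng = pRng Q e (p.edges.take v.edges.length) := by
    rw [GPath.rng, hvs, hp.1, ← hv]
  exact hrng ▸ hmin _ (List.length_pos_iff.mpr hvne) hlt

/-- The first return of a non-trivial cycle to its base point. -/
theorem exists_mem_Cyc1_prefix {w : GPath Q} (hw : w ∈ Cyc Q e) (hne : w.edges ≠ []) :
    ∃ p ∈ Cyc1 Q e, p.edges ≠ [] ∧ p.edges <+: w.edges := by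
  classical
  have hP : ∃ k, 0 < k ∧ k ≤ w.edges.length ∧ pRng Q e (w.edges.take k) = e :=
    ⟨_, List.length_pos_iff.mpr hne, le_rfl, by rw [List.take_length]; exact pRng_of_mem_Cyc hw⟩
  obtain ⟨hk0, hkw, hkr⟩ := Nat.find_spec hP
  have hok : pOk Q e (w.edges.take (Nat.find hP)) :=
    pOk_of_append (l₂ := w.edges.drop (Nat.find hP)) <| by
      rw [List.take_append_drop]; exact pOk_of_mem_Cyc hw
  have hlen : (w.edges.take (Nat.find hP)).length = Nat.find hP := List.length_take_of_le hkw
  refine ⟨⟨e, w.edges.take (Nat.find hP), hok⟩,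
    mem_Cyc1_of_forall_take ⟨rfl, hkr⟩ fun j hj0 hjk => ?_,
    List.ne_nil_of_length_pos (by rw [hlen]; exact hk0), List.take_prefix _ _⟩
  rw [hlen] at hjk
  rw [List.take_take, min_eq_left hjk.le]
  exact fun hj => Nat.find_min hP hjk ⟨hj0, hjk.le.trans hkw, hj⟩

def edgesPow (u : GPath Q) : ℕ → List Q.E
  | 0 => []
  | n + 1 => u.edges ++ edgesPow u n

theorem edgesPow_add (u : GPath Q) (m n : ℕ) : edgesPow u (m + n) = edgesPow u m ++ edgesPow u n := by
  induction m with
  | zero => simp [edgesPow]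
  | succ m ih => rw [Nat.succ_add, edgesPow, edgesPow, ih, List.append_assoc]

theorem length_edgesPow (u : GPath Q) (n : ℕ) : (edgesPow u n).length = n * u.edges.length := by
  induction n with
  | zero => simp [edgesPow]
  | succ n ih => rw [edgesPow, List.length_append, ih]; ring

theorem edgesPow_injective (hne : u.edges ≠ []) : Function.Injective (edgesPow u) := fun m n h => by
  have := congrArg List.length h
  rwa [length_edgesPow, length_edgesPow, Nat.mul_left_inj (List.length_pos_iff.mpr hne).ne'] at this

theorem pRng_edgesPow (hu : u ∈ Cyc Q e) : ∀ n, pRng Q e (edgesPow u n) = e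
  | 0 => rfl
  | n + 1 => by rw [edgesPow, pRng_append, pRng_of_mem_Cyc hu, pRng_edgesPow hu n]

theorem pOk_edgesPow (hu : u ∈ Cyc Q e) : ∀ n, pOk Q e (edgesPow u n)
  | 0 => trivial
  | n + 1 => pOk_append (pOk_of_mem_Cyc hu) ((pRng_of_mem_Cyc hu).symm ▸ pOk_edgesPow hu n)

def cyclePow (hu : u ∈ Cyc Q e) (n : ℕ) : GPath Q := ⟨e, edgesPow u n, pOk_edgesPow hu n⟩

@[simp] theorem cyclePow_edges (hu : u ∈ Cyc Q e) (n : ℕ) : (cyclePow hu n).edges = edgesPow u n := rfl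

theorem cyclePow_rng (hu : u ∈ Cyc Q e) (n : ℕ) : (cyclePow hu n).rng = e := pRng_edgesPow hu n

theorem cyclePow_mem_Cyc (hu : u ∈ Cyc Q e) (n : ℕ) : cyclePow hu n ∈ Cyc Q e := ⟨rfl, cyclePow_rng hu n⟩

theorem subPath_cyclePow (hu : u ∈ Cyc Q e) (n d : ℕ) (h₁ h₂) :
    subPath (cyclePow hu n) (cyclePow hu (n + d)) h₁ h₂ = cyclePow hu d := by
  obtain ⟨hs, -, happ⟩ := subPath_spec (cyclePow hu n) (cyclePow hu (n + d)) h₁ h₂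
  refine GPath.ext (hs.trans (cyclePow_rng hu n)) (List.append_cancel_left (as := edgesPow u n) ?_)
  rw [cyclePow_edges, ← edgesPow_add]; exact happ

theorem exists_edges_eq_edgesPow (hu : Cyc1 Q e \ {GPath.triv Q e} = {u}) {w : GPath Q}
    (hw : w ∈ Cyc Q e) : ∃ n, w.edges = edgesPow u n := by
  induction hlen : w.edges.length using Nat.strong_induction_on generalizing w with
  | _ N ih =>
  by_cases hne : w.edges = []
  · exact ⟨0, hne⟩
  obtain ⟨p, hp, hpne, hpw⟩ := exists_mem_Cyc1_prefix hw hne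
  have hpu : p = u := by
    rw [← Set.mem_singleton_iff, ← hu]
    exact ⟨hp, fun h => hpne (congrArg GPath.edges h)⟩
  subst hpu
  obtain ⟨w', hs, hr, happ⟩ := exists_sub (hw.1.trans hp.1.1.symm) hpw
  have hw' : w' ∈ Cyc Q e := ⟨hs.trans hp.1.2, hr.trans hw.2⟩
  have hlt : w'.edges.length < N := by
    rw [← hlen, ← happ, List.length_append]
    have := List.length_pos_iff.mpr hpne
    omega
  obtain ⟨n, hn⟩ := ih _ hlt hw' rfl
  exact ⟨n + 1, by rw [← happ, hn, edgesPow]⟩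

/-- The element `uᵐ (uⁿ)⁻¹` of `G(E)`. -/
def cyclePowElm (hu : u ∈ Cyc Q e) (m n : ℕ) : GIS Q :=
  GIS.elm (cyclePow hu m) (cyclePow hu n) (by rw [cyclePow_rng, cyclePow_rng])

theorem cyclePowElm_mul_of_le (hu : u ∈ Cyc Q e) (m n d l : ℕ) :
    cyclePowElm hu m n * cyclePowElm hu (n + d) l = cyclePowElm hu (m + d) l := by
  have hA : (cyclePow hu (n + d)).start = (cyclePow hu n).start ∧
      (cyclePow hu n).edges <+: (cyclePow hu (n + d)).edges := ⟨rfl, edgesPow u d, (edgesPow_add u n d).symm⟩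
  show GIS.mul (GIS.elm _ _ _) (GIS.elm _ _ _) = _
  simp only [GIS.mul]
  rw [dif_pos hA]
  refine GIS.elm_congr (GPath.ext rfl ?_) rfl
  simp only [GPath.comp, subPath_cyclePow, cyclePow_edges, edgesPow_add]

theorem cyclePowElm_mul_of_gt (hu : u ∈ Cyc Q e) (hne : u.edges ≠ []) (m k d l : ℕ) :
    cyclePowElm hu m (k + (d + 1)) * cyclePowElm hu k l = cyclePowElm hu m (l + (d + 1)) := by
  have hA : ¬((cyclePow hu k).start = (cyclePow hu (k + (d + 1))).start ∧
      (cyclePow hu (k + (d + 1))).edges <+: (cyclePow hu k).edges) := by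
    rintro ⟨-, hpre⟩
    have := hpre.length_le
    simp only [cyclePow_edges, length_edgesPow] at this
    have := List.length_pos_iff.mpr hne
    nlinarith
  have hB : (cyclePow hu (k + (d + 1))).start = (cyclePow hu k).start ∧
      (cyclePow hu k).edges <+: (cyclePow hu (k + (d + 1))).edges :=
    ⟨rfl, edgesPow u (d + 1), (edgesPow_add u k (d + 1)).symm⟩
  show GIS.mul (GIS.elm _ _ _) (GIS.elm _ _ _) = _
  simp only [GIS.mul]
  rw [dif_neg hA, dif_pos hB]
  refine GIS.elm_congr rfl (GPath.ext rfl ?_)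
  simp only [GPath.comp, subPath_cyclePow, cyclePow_edges, edgesPow_add]

theorem cyclePowElm_mul (hu : u ∈ Cyc Q e) (hne : u.edges ≠ []) (m n k l : ℕ) :
    cyclePowElm hu m n * cyclePowElm hu k l = cyclePowElm hu (m + k - min n k) (n + l - min n k) := by
  rcases le_or_gt n k with hnk | hkn
  · obtain ⟨d, rfl⟩ := Nat.exists_eq_add_of_le hnk
    rw [cyclePowElm_mul_of_le, min_eq_left hnk]
    congr 1 <;> omega
  · obtain ⟨d, rfl⟩ := Nat.exists_eq_add_of_lt hkn
    rw [add_assoc, cyclePowElm_mul_of_gt hu hne, min_eq_right (by omega)]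
    congr 1 <;> omega

theorem toGIS_cyclePow (hu : u ∈ Cyc Q e) (n : ℕ) : toGIS (cyclePow hu n) = cyclePowElm hu n 0 :=
  GIS.elm_congr rfl (GPath.ext (cyclePow_rng hu n) rfl)

theorem GIS.inv_cyclePowElm (hu : u ∈ Cyc Q e) (m n : ℕ) :
    GIS.inv (cyclePowElm hu m n) = cyclePowElm hu n m := rfl

theorem genInv_cyclePowElm (hu : u ∈ Cyc Q e) (m n : ℕ) :
    genInv (toGIS '' Cyc Q e) (cyclePowElm hu m n) := by
  have hgen : ∀ j, genInv (toGIS '' Cyc Q e) (cyclePowElm hu j 0) := fun j =>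
    .base ⟨cyclePow hu j, cyclePow_mem_Cyc hu j, toGIS_cyclePow hu j⟩
  have hmul := cyclePowElm_mul_of_le hu m 0 0 n
  rw [add_zero, add_zero] at hmul
  exact hmul ▸ (hgen m).mul (GIS.inv_cyclePowElm hu n 0 ▸ (hgen n).inv)

theorem exists_eq_cyclePowElm_of_genInv (hu : Cyc1 Q e \ {GPath.triv Q e} = {u})
    (hcyc : u ∈ Cyc Q e) (hne : u.edges ≠ []) {x : GIS Q} (hx : genInv (toGIS '' Cyc Q e) x) :
    ∃ m n, x = cyclePowElm hcyc m n := by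
  induction hx with
  | base h =>
    obtain ⟨w, hw, rfl⟩ := h
    obtain ⟨n, hn⟩ := exists_edges_eq_edgesPow hu hw
    have hwn : w = cyclePow hcyc n := GPath.ext hw.1 hn
    exact ⟨n, 0, by rw [hwn, toGIS_cyclePow]⟩
  | mul _ _ ihx ihy =>
    obtain ⟨m, n, rfl⟩ := ihx
    obtain ⟨k, l, rfl⟩ := ihy
    exact ⟨_, _, cyclePowElm_mul hcyc hne m n k l⟩
  | inv _ ihx =>
    obtain ⟨m, n, rfl⟩ := ihx
    exact ⟨n, m, rfl⟩

noncomputable def cyclePowHom (hu : u ∈ Cyc Q e) (hne : u.edges ≠ []) :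
    Bic →ₙ* {x : GIS Q // genInv (toGIS '' Cyc Q e) x} where
  toFun x := ⟨cyclePowElm hu x.1 x.2, genInv_cyclePowElm hu x.1 x.2⟩
  map_mul' x y := Subtype.ext (cyclePowElm_mul hu hne x.1 x.2 y.1 y.2).symm

theorem cyclePowHom_injective (hu : u ∈ Cyc Q e) (hne : u.edges ≠ []) :
    Function.Injective (cyclePowHom hu hne) := by
  rintro ⟨m, n⟩ ⟨k, l⟩ h
  obtain ⟨hmk, hnl⟩ := GIS.elm.inj (congrArg Subtype.val h)
  exact Prod.ext (edgesPow_injective hne (congrArg GPath.edges hmk))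
    (edgesPow_injective hne (congrArg GPath.edges hnl))

theorem cyclePowHom_surjective (hu : Cyc1 Q e \ {GPath.triv Q e} = {u}) (hcyc : u ∈ Cyc Q e)
    (hne : u.edges ≠ []) : Function.Surjective (cyclePowHom hcyc hne) := fun x => by
  obtain ⟨m, n, hx⟩ := exists_eq_cyclePowElm_of_genInv hu hcyc hne x.2
  exact ⟨(m, n), Subtype.ext hx.symm⟩

end DGraph

theorem stmt4 (Q : DGraph) (e : Q.V)
    (h : ∃ u : GPath Q, Cyc1 Q e \ {GPath.triv Q e} = {u}) :
    ∃ f : {x : GIS Q // genInv (toGIS '' Cyc Q e) x} ≃ Bic,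
      ∀ a b, f (a * b) = f a * f b := by
  obtain ⟨u, hu⟩ := h
  have hmem : u ∈ Cyc1 Q e \ {GPath.triv Q e} := hu ▸ rfl
  have hcyc : u ∈ Cyc Q e := hmem.1.1
  have hne : u.edges ≠ [] := fun hnil => hmem.2 (GPath.ext hcyc.1 hnil)
  let φ := MulEquiv.ofBijective (cyclePowHom hcyc hne)
    ⟨cyclePowHom_injective hcyc hne, cyclePowHom_surjective hu hcyc hne⟩
  exact ⟨φ.symm.toEquiv, map_mul φ.symm⟩
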